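/- For all subsets D, E ⊆ {1,…,n−1}, the space of right H𝔖_n-module homomorphisms from P_D to P_E has dimension dim_ℂ Hom_{H𝔖_n}(P_D, P_E) = 1 if D ⊆ E, and 0 otherwise. In other words, the Cartan matrix of H𝔖_n is the incidence matrix of the boolean lattice of subsets of {1,…,n−1}. -/

import Mathlib

open scoped Classical

set_option maxHeartbeats 1000000
set_option synthInstance.maxHeartbeats 400000

noncomputable section

/-- The symmetric group on `{1, …, n}`, 0-indexed as permutations of `Fin n`
(so positions/descents are indexed by `i ∈ {0, …, n-2}` instead of `{1, …, n-1}`). -/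
abbrev PermN (n : ℕ) := Equiv.Perm (Fin n)

/-- The vector space `ℂ𝔖ₙ` with basis the symmetric group. -/
abbrev CS (n : ℕ) := Equiv.Perm (Fin n) →₀ ℂ

/-- The elementary transposition `sᵢ` exchanging `i` and `i+1` (0-indexed). -/
def swapAt (n i : ℕ) (h : i + 1 < n) : PermN n :=
  Equiv.swap ⟨i, Nat.lt_of_succ_lt h⟩ ⟨i + 1, h⟩

/-- The operator `σᵢ` on `ℂ𝔖ₙ`: right multiplication by `sᵢ` (action on positions),
`μ ↦ μ sᵢ`. -/
def sigmaOp (n i : ℕ) : Module.End ℂ (CS n) :=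
  if h : i + 1 < n then Finsupp.lmapDomain ℂ ℂ (fun μ => μ * swapAt n i h) else 1

/-- The elementary decreasing sorting operator `πᵢ` on `ℂ𝔖ₙ`:
`μ ↦ μ` if `μᵢ > μᵢ₊₁` and `μ ↦ μ sᵢ` otherwise. -/
def piOp (n i : ℕ) : Module.End ℂ (CS n) :=
  if h : i + 1 < n then
    Finsupp.lmapDomain ℂ ℂ (fun μ : PermN n =>
      if μ ⟨i + 1, h⟩ < μ ⟨i, Nat.lt_of_succ_lt h⟩ then μ else μ * swapAt n i h)
  else 1

/-- The operator `σ̄ᵢ` on `ℂ𝔖ₙ`: left multiplication by `sᵢ` (action on values),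
`μ ↦ sᵢ μ`. -/
def sigmaBarOp (n i : ℕ) : Module.End ℂ (CS n) :=
  if h : i + 1 < n then Finsupp.lmapDomain ℂ ℂ (fun μ => swapAt n i h * μ) else 1

/-- The operator `σ_σ` of right multiplication by a permutation `σ`
(equal to the product of the `σᵢ` along any reduced word for `σ`). -/
def rightMulOp (n : ℕ) (σ : PermN n) : Module.End ℂ (CS n) :=
  Finsupp.lmapDomain ℂ ℂ (fun μ => μ * σ)

/-- The algebra `H𝔖ₙ`: the subalgebra of `End(ℂ𝔖ₙ)` generated by the operators
`σ₁, …, σ_{n-1}, π₁, …, π_{n-1}`.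

Note on conventions: the paper composes operators left to right, `v·(fg) = (v·f)·g`,
while multiplication in `Module.End` is `(f * g) v = f (g v)`.  Hence the paper's
product `f·g` is `g * f` here.  This does not affect the generated subalgebra. -/
def HS (n : ℕ) : Subalgebra ℂ (Module.End ℂ (CS n)) :=
  Algebra.adjoin ℂ
    ({f | ∃ i, ∃ _ : i + 1 < n, f = sigmaOp n i} ∪ {f | ∃ i, ∃ _ : i + 1 < n, f = piOp n i})

/-- The descent set `Des(μ) = {i : μᵢ > μᵢ₊₁}` (0-indexed positions). -/
def Des (n : ℕ) (μ : PermN n) : Set ℕ :=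
  {i | ∃ h : i + 1 < n, μ ⟨i + 1, h⟩ < μ ⟨i, Nat.lt_of_succ_lt h⟩}

/-- The module `P_D`: the vectors of `ℂ𝔖ₙ` that are left `i`-antisymmetric
for every `i ∉ D` (0-indexed, `i+1 < n`). -/
def PD (n : ℕ) (D : Set ℕ) : Submodule ℂ (CS n) :=
  ⨅ i : {i : ℕ // i + 1 < n ∧ i ∉ D}, LinearMap.ker (1 + sigmaBarOp n i.1)

/-- The Young subgroup `𝔖_⟨D⟩` generated by the `sᵢ` for `i ∉ D`. -/
def Young (n : ℕ) (D : Set ℕ) : Subgroup (PermN n) :=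
  Subgroup.closure {g | ∃ i, ∃ h : i + 1 < n, i ∉ D ∧ g = swapAt n i h}

/-- The vector `v_D = ∑_{ν ∈ 𝔖_⟨D⟩} (-1)^{ℓ(ν)} ν` (the sign `(-1)^{ℓ(ν)}` is the
signature of `ν`). -/
def vD (n : ℕ) (D : Set ℕ) : CS n :=
  ∑ᶠ ν ∈ (Young n D : Set (PermN n)),
    ((Equiv.Perm.sign ν : ℤ) : ℂ) • Finsupp.single ν 1

/-- The vector `v_σ := v_{Des(σ⁻¹)} · σ_σ`. -/
def vPerm (n : ℕ) (σ : PermN n) : CS n :=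
  rightMulOp n σ (vD n (Des n σ⁻¹))

-- Helper instances, to avoid very deep instance searches.
noncomputable instance (priority := 10000) pdACG (n : ℕ) (D : Set ℕ) :
    AddCommGroup ↥(PD n D) :=
  @Submodule.addCommGroup ℂ (CS n) _ _ _ (PD n D)

noncomputable instance (priority := 10000) pdHomACG (n : ℕ) (D E : Set ℕ) :
    AddCommGroup (↥(PD n D) →ₗ[ℂ] ↥(PD n E)) :=
  LinearMap.addCommGroup

/-- The space `Hom_{H𝔖ₙ}(P_D, P_E)` of `H𝔖ₙ`-module homomorphisms from `P_D` to `P_E`: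
`ℂ`-linear maps commuting with the action of every operator of `H𝔖ₙ`. -/
def HomPD (n : ℕ) (D E : Set ℕ) : Submodule ℂ (↥(PD n D) →ₗ[ℂ] ↥(PD n E)) where
  carrier := {φ | ∀ a : Module.End ℂ (CS n), a ∈ HS n →
    ∀ v w : ↥(PD n D), (w : CS n) = a (v : CS n) → (φ w : CS n) = a (φ v : CS n)}
  add_mem' := by
    intro φ ψ hφ hψ a ha v w hw
    simp only [LinearMap.add_apply, Submodule.coe_add, hφ a ha v w hw,
      hψ a ha v w hw, map_add]
  zero_mem' := by
    intro a ha v w hw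
    simp
  smul_mem' := by
    intro c φ hφ a ha v w hw
    simp only [LinearMap.smul_apply, Submodule.coe_smul, hφ a ha v w hw, map_smul]


/-!
The vector `v_D` generates `P_D`: every `w ∈ P_D` transforms by the sign under left multiplication
by the Young subgroup `𝔖_⟨D⟩`, so summing the right translates `v_D · σ_τ` with weights `w(τ)`
gives back `|𝔖_⟨D⟩| • w`. Hence a homomorphism `φ : P_D → P_E` is determined by `x = φ(v_D)`, and
`x` is killed by every operator of `H𝔖ₙ` that kills `v_D`, in particular by `1 + σᵢ` for `i ∉ D`
and by `πᵢ - σᵢ` for `i ∈ D`. The first makes `x` antisymmetric under right multiplication by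
`𝔖_⟨D⟩`; the second makes it vanish on permutations with a descent in `D`, and a sorting argument
(induction on inversions) puts the support of such an `x` inside `𝔖_⟨D⟩`. So `x = c • v_D` and `φ`
is `c` times the inclusion `P_D ⊆ P_E`; when `D ⊄ E` that inclusion fails on `v_D`, forcing
`c = 0`.
-/

section

open Finset

variable {n : ℕ}

lemma swapAt_mul_self (i : ℕ) (h : i + 1 < n) : swapAt n i h * swapAt n i h = 1 :=
  Equiv.swap_mul_self _ _

lemma swapAt_inv (i : ℕ) (h : i + 1 < n) : (swapAt n i h)⁻¹ = swapAt n i h :=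
  Equiv.swap_inv _ _

lemma sign_swapAt (i : ℕ) (h : i + 1 < n) : Equiv.Perm.sign (swapAt n i h) = -1 :=
  Equiv.Perm.sign_swap (by simp [Fin.ext_iff])

lemma sign_mul_sign (ν : PermN n) :
    ((Equiv.Perm.sign ν : ℤ) : ℂ) * ((Equiv.Perm.sign ν : ℤ) : ℂ) = 1 := by
  rw [← Int.cast_mul, ← Units.val_mul, Int.units_mul_self, Units.val_one, Int.cast_one]

lemma rightMulOp_apply (σ : PermN n) (x : CS n) (τ : PermN n) :
    rightMulOp n σ x τ = x (τ * σ⁻¹) :=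
  Finsupp.mapDomain_equiv_apply (f := Equiv.mulRight σ) x τ

lemma rightMulOp_one : rightMulOp n 1 = 1 :=
  LinearMap.ext fun x => Finsupp.ext fun τ => by simp [rightMulOp_apply]

lemma rightMulOp_mul (σ ρ : PermN n) : rightMulOp n (σ * ρ) = rightMulOp n ρ * rightMulOp n σ :=
  LinearMap.ext fun x => Finsupp.ext fun τ => by simp [rightMulOp_apply, mul_assoc]

lemma sigmaOp_eq_rightMulOp (i : ℕ) (h : i + 1 < n) :
    sigmaOp n i = rightMulOp n (swapAt n i h) := by
  rw [sigmaOp, dif_pos h, rightMulOp]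

lemma sigmaOp_apply (i : ℕ) (h : i + 1 < n) (x : CS n) (τ : PermN n) :
    sigmaOp n i x τ = x (τ * swapAt n i h) := by
  rw [sigmaOp_eq_rightMulOp i h, rightMulOp_apply, swapAt_inv]

lemma sigmaBarOp_apply (i : ℕ) (h : i + 1 < n) (x : CS n) (τ : PermN n) :
    sigmaBarOp n i x τ = x (swapAt n i h * τ) := by
  rw [sigmaBarOp, dif_pos h, ← swapAt_inv i h]
  exact Finsupp.mapDomain_equiv_apply (f := Equiv.mulLeft (swapAt n i h)) x τ

lemma mem_des_iff {i : ℕ} (h : i + 1 < n) {μ : PermN n} :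
    i ∈ Des n μ ↔ μ ⟨i + 1, h⟩ < μ ⟨i, Nat.lt_of_succ_lt h⟩ :=
  ⟨fun ⟨_, hμ⟩ => hμ, fun hμ => ⟨h, hμ⟩⟩

lemma mem_des_mul_swapAt_iff {i : ℕ} (h : i + 1 < n) (μ : PermN n) :
    i ∈ Des n (μ * swapAt n i h) ↔ i ∉ Des n μ := by
  rw [mem_des_iff h, mem_des_iff h, not_lt, Equiv.Perm.mul_apply, Equiv.Perm.mul_apply, swapAt,
    Equiv.swap_apply_left, Equiv.swap_apply_right, le_iff_lt_or_eq, μ.injective.eq_iff]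
  simp [Fin.ext_iff]

lemma piOp_eq (i : ℕ) (h : i + 1 < n) (x : CS n) :
    piOp n i x =
      x.filter (fun τ => i ∈ Des n τ) + sigmaOp n i (x.filter (fun τ => i ∉ Des n τ)) := by
  conv_lhs => rw [← Finsupp.filter_add_filter_not x (fun τ => i ∈ Des n τ)]
  rw [piOp, dif_pos h, map_add, sigmaOp, dif_pos h, Finsupp.lmapDomain_apply,
    Finsupp.lmapDomain_apply, Finsupp.lmapDomain_apply]
  congr 1
  · rw [Finsupp.mapDomain_congr (g := id), Finsupp.mapDomain_id]
    intro τ hτ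
    rw [Finsupp.support_filter, Finset.mem_filter] at hτ
    exact if_pos ((mem_des_iff h).mp hτ.2)
  · refine Finsupp.mapDomain_congr fun τ hτ => ?_
    rw [Finsupp.support_filter, Finset.mem_filter] at hτ
    exact if_neg ((mem_des_iff h).not.mp hτ.2)

lemma piOp_sub_sigmaOp_eq_zero_iff (i : ℕ) (h : i + 1 < n) (x : CS n) :
    (piOp n i - sigmaOp n i) x = 0 ↔ ∀ τ, i ∈ Des n τ → x τ = 0 := by
  have hx : (piOp n i - sigmaOp n i) x = x.filter (fun τ => i ∈ Des n τ) -
      sigmaOp n i (x.filter (fun τ => i ∈ Des n τ)) := by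
    have hσ := congrArg (sigmaOp n i) (Finsupp.filter_add_filter_not x (fun τ => i ∈ Des n τ))
    rw [map_add] at hσ
    rw [LinearMap.sub_apply, piOp_eq i h, ← hσ]
    abel
  rw [hx, ← Finsupp.filter_eq_zero_iff]
  constructor
  · intro h0
    ext τ
    have hτ := DFunLike.congr_fun h0 τ
    rw [Finsupp.sub_apply, sigmaOp_apply i h, Finsupp.zero_apply, Finsupp.filter_apply,
      Finsupp.filter_apply, mem_des_mul_swapAt_iff] at hτ
    by_cases hd : i ∈ Des n τ <;> simp_all
  · intro h0
    rw [h0, map_zero, sub_zero]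

lemma val_swapAt_apply {i : ℕ} (h : i + 1 < n) (k : Fin n) :
    (swapAt n i h k : ℕ) = if (k : ℕ) = i then i + 1 else if (k : ℕ) = i + 1 then i else k := by
  simp only [swapAt, Equiv.swap_apply_def, Fin.ext_iff]
  split_ifs <;> rfl

lemma swapAt_mem_young {D : Set ℕ} {i : ℕ} (h : i + 1 < n) (hi : i ∉ D) :
    swapAt n i h ∈ Young n D :=
  Subgroup.subset_closure ⟨i, h, hi, rfl⟩

lemma val_le_iff_of_mem_young {D : Set ℕ} {ν : PermN n} (hν : ν ∈ Young n D) {i : ℕ}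
    (hi : i ∈ D) (k : Fin n) : (ν k : ℕ) ≤ i ↔ (k : ℕ) ≤ i := by
  induction hν using Subgroup.closure_induction generalizing k with
  | mem g hg =>
    obtain ⟨j, h, hj, rfl⟩ := hg
    have hji : j ≠ i := fun hji => hj (hji ▸ hi)
    rw [val_swapAt_apply]
    split_ifs <;> omega
  | one => rfl
  | mul a b _ _ ha hb => rw [Equiv.Perm.mul_apply, ha, hb]
  | inv a _ ha => simpa using (ha (a⁻¹ k)).symm

lemma not_mem_des_of_mem_young {D : Set ℕ} {ν : PermN n} (hν : ν ∈ Young n D) {i : ℕ}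
    (hi : i ∈ D) : i ∉ Des n ν := by
  rintro ⟨h, hlt⟩
  have hle := (val_le_iff_of_mem_young hν hi ⟨i, Nat.lt_of_succ_lt h⟩).mpr le_rfl
  have hgt := (val_le_iff_of_mem_young hν hi ⟨i + 1, h⟩).not.mpr (by simp)
  rw [Fin.lt_def] at hlt
  omega

/-- Inversions are indexed by values, so that `invSet (τ * sᵢ) ⊂ invSet τ` at a descent `i`. -/
def invSet (τ : PermN n) : Finset (Fin n × Fin n) :=
  {p | p.1 < p.2 ∧ τ⁻¹ p.2 < τ⁻¹ p.1}

lemma invSet_mul_swapAt_ssubset {i : ℕ} (h : i + 1 < n) {τ : PermN n} (hτ : i ∈ Des n τ) :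
    invSet (τ * swapAt n i h) ⊂ invSet τ := by
  set s := swapAt n i h
  have mem_invSet_mul : ∀ p : Fin n × Fin n,
      p ∈ invSet (τ * s) ↔ p.1 < p.2 ∧ s (τ⁻¹ p.2) < s (τ⁻¹ p.1) := by
    simp [invSet, s, swapAt_inv]
  rw [mem_des_iff h] at hτ
  refine (Finset.ssubset_iff_of_subset fun p hp => ?_).mpr
    ⟨(τ ⟨i + 1, h⟩, τ ⟨i, Nat.lt_of_succ_lt h⟩), ?_, ?_⟩
  · obtain ⟨hlt, hs⟩ := (mem_invSet_mul p).mp hp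
    refine Finset.mem_filter.mpr ⟨Finset.mem_univ _, hlt, ?_⟩
    by_contra hge
    rw [Fin.lt_def, val_swapAt_apply, val_swapAt_apply] at hs
    rw [Fin.lt_def] at hge
    have h2 : τ⁻¹ p.2 = ⟨i + 1, h⟩ := by ext; split_ifs at hs <;> omega
    have h1 : τ⁻¹ p.1 = ⟨i, Nat.lt_of_succ_lt h⟩ := by ext; split_ifs at hs <;> omega
    rw [Equiv.Perm.inv_eq_iff_eq] at h1 h2
    exact lt_asymm hτ (h1 ▸ h2 ▸ hlt)
  · exact Finset.mem_filter.mpr ⟨Finset.mem_univ _, hτ, by simp⟩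
  · rw [mem_invSet_mul]
    simp [s, swapAt]

lemma eq_one_of_forall_not_mem_des {τ : PermN n} (hτ : ∀ i, i ∉ Des n τ) : τ = 1 := by
  cases n with
  | zero => exact Subsingleton.elim _ _
  | succ m =>
    have hmono : StrictMono τ := Fin.strictMono_iff_lt_succ.mpr fun k => by
      have hk := (mem_des_iff (by omega)).not.mp (hτ k)
      exact lt_of_le_of_ne (not_lt.mp hk) (τ.injective.ne (by simp [Fin.ext_iff]))
    have := Subsingleton.elim (hmono.orderIsoOfSurjective τ τ.surjective) (OrderIso.refl _)
    exact Equiv.ext fun k => congrArg (fun e : Fin (m + 1) ≃o Fin (m + 1) => e k) this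

lemma subset_young_of_mul_swapAt_mem {D : Set ℕ} {S : Set (PermN n)}
    (hS : ∀ τ ∈ S, ∀ i (h : i + 1 < n), i ∉ D → τ * swapAt n i h ∈ S)
    (hdes : ∀ τ ∈ S, ∀ i ∈ D, i ∉ Des n τ) : S ⊆ Young n D := by
  intro τ hτ
  induction τ using (measure fun τ : PermN n => #(invSet τ)).wf.induction with
  | _ τ ih =>
  by_cases hτ1 : ∃ i, i ∈ Des n τ
  · obtain ⟨i, hi⟩ := hτ1
    have hiD : i ∉ D := fun hiD => hdes τ hτ i hiD hi
    have hτs := ih _ (Finset.card_lt_card (invSet_mul_swapAt_ssubset hi.1 hi))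
      (hS τ hτ i hi.1 hiD)
    simpa [mul_assoc, swapAt_mul_self] using mul_mem hτs (swapAt_mem_young hi.1 hiD)
  · rw [eq_one_of_forall_not_mem_des (not_exists.mp hτ1)]
    exact one_mem _

lemma young_empty : Young n ∅ = ⊤ :=
  top_unique fun τ _ => subset_young_of_mul_swapAt_mem (S := Set.univ) (fun _ _ _ _ _ => trivial)
    (fun _ _ i hi => absurd hi (Set.notMem_empty i)) (Set.mem_univ τ)

lemma vD_apply (D : Set ℕ) (τ : PermN n) :
    vD n D τ = if τ ∈ Young n D then ((Equiv.Perm.sign τ : ℤ) : ℂ) else 0 := by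
  rw [vD, finsum_mem_eq_finite_toFinset_sum _ (Set.toFinite _), Finset.sum_apply']
  simp [Finsupp.single_apply]

lemma vD_one (D : Set ℕ) : vD n D 1 = 1 := by
  simp [vD_apply, one_mem]

lemma vD_mul_swapAt {D : Set ℕ} {i : ℕ} (h : i + 1 < n) (hi : i ∉ D) (τ : PermN n) :
    vD n D (τ * swapAt n i h) = -vD n D τ := by
  rw [vD_apply, vD_apply, Subgroup.mul_mem_cancel_right _ (swapAt_mem_young h hi)]
  split_ifs <;> simp [sign_swapAt]

lemma vD_swapAt_mul {D : Set ℕ} {i : ℕ} (h : i + 1 < n) (hi : i ∉ D) (τ : PermN n) :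
    vD n D (swapAt n i h * τ) = -vD n D τ := by
  rw [vD_apply, vD_apply, Subgroup.mul_mem_cancel_left _ (swapAt_mem_young h hi)]
  split_ifs <;> simp [sign_swapAt]

lemma mem_PD_iff {D : Set ℕ} {w : CS n} :
    w ∈ PD n D ↔ ∀ i (h : i + 1 < n), i ∉ D → ∀ τ, w (swapAt n i h * τ) = -w τ := by
  simp only [PD, Submodule.mem_iInf, LinearMap.mem_ker, LinearMap.add_apply, Module.End.one_apply,
    Finsupp.ext_iff, Finsupp.add_apply, Finsupp.zero_apply, Subtype.forall, and_imp]
  refine forall_congr' fun i => forall_congr' fun h => forall_congr' fun _ =>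
    forall_congr' fun τ => ?_
  rw [sigmaBarOp_apply i h, add_comm, ← eq_neg_iff_add_eq_zero]

lemma PD_mono {D E : Set ℕ} (hDE : D ⊆ E) : PD n D ≤ PD n E :=
  fun _ hw => mem_PD_iff.mpr fun i h hiE => mem_PD_iff.mp hw i h fun hiD => hiE (hDE hiD)

lemma vD_mem_PD (D : Set ℕ) : vD n D ∈ PD n D :=
  mem_PD_iff.mpr fun _ h hi => vD_swapAt_mul h hi

lemma vD_not_mem_PD {D E : Set ℕ} {i : ℕ} (h : i + 1 < n) (hiD : i ∈ D) (hiE : i ∉ E) :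
    vD n D ∉ PD n E := by
  intro hv
  have hs : swapAt n i h ∉ Young n D := fun hs =>
    not_mem_des_of_mem_young hs hiD ((mem_des_iff h).mpr (by simp [swapAt]))
  have := mem_PD_iff.mp hv i h hiE 1
  rw [mul_one, vD_one, vD_apply, if_neg hs] at this
  norm_num at this

lemma apply_mul_eq_sign_mul_of_mem_PD {D : Set ℕ} {w : CS n} (hw : w ∈ PD n D) {ν : PermN n}
    (hν : ν ∈ Young n D) (τ : PermN n) : w (ν * τ) = (Equiv.Perm.sign ν : ℤ) * w τ := by
  induction hν using Subgroup.closure_induction generalizing τ with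
  | mem s hs =>
    obtain ⟨i, h, hi, rfl⟩ := hs
    rw [mem_PD_iff.mp hw i h hi, sign_swapAt]
    push_cast
    ring
  | one => simp
  | mul a b _ _ ha hb =>
    rw [mul_assoc, ha, hb, map_mul]
    push_cast
    ring
  | inv a _ ha =>
    have hτ : w τ = (Equiv.Perm.sign a : ℤ) * w (a⁻¹ * τ) := by simpa using ha (a⁻¹ * τ)
    rw [Equiv.Perm.sign_inv, hτ, ← mul_assoc, sign_mul_sign, one_mul]

lemma apply_mul_eq_sign_mul_of_mem_young {D : Set ℕ} {x : CS n}
    (hx : ∀ i (h : i + 1 < n), i ∉ D → ∀ τ, x (τ * swapAt n i h) = -x τ)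
    {ν : PermN n} (hν : ν ∈ Young n D) (τ : PermN n) :
    x (τ * ν) = (Equiv.Perm.sign ν : ℤ) * x τ := by
  induction hν using Subgroup.closure_induction generalizing τ with
  | mem s hs =>
    obtain ⟨i, h, hi, rfl⟩ := hs
    rw [hx i h hi, sign_swapAt]
    push_cast
    ring
  | one => simp
  | mul a b _ _ ha hb =>
    rw [← mul_assoc, hb, ha, map_mul]
    push_cast
    ring
  | inv a _ ha =>
    have hτ : x τ = (Equiv.Perm.sign a : ℤ) * x (τ * a⁻¹) := by simpa using ha (τ * a⁻¹)
    rw [Equiv.Perm.sign_inv, hτ, ← mul_assoc, sign_mul_sign, one_mul]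

lemma eq_smul_vD {D : Set ℕ} {x : CS n}
    (hx : ∀ i (h : i + 1 < n), i ∉ D → ∀ τ, x (τ * swapAt n i h) = -x τ)
    (hdes : ∀ i ∈ D, ∀ τ, i ∈ Des n τ → x τ = 0) : x = x 1 • vD n D := by
  ext τ
  rw [Finsupp.smul_apply, vD_apply, smul_eq_mul]
  split_ifs with hτ
  · simpa [mul_comm] using apply_mul_eq_sign_mul_of_mem_young hx hτ 1
  · rw [mul_zero]
    by_contra hxτ
    refine hτ (subset_young_of_mul_swapAt_mem (S := {τ | x τ ≠ 0}) (fun σ hσ i h hi => ?_)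
      (fun σ hσ i hi hσi => hσ (hdes i hi σ hσi)) hxτ)
    simpa [hx i h hi] using hσ

lemma sigmaOp_mem_HS (i : ℕ) (h : i + 1 < n) : sigmaOp n i ∈ HS n :=
  Algebra.subset_adjoin (Or.inl ⟨i, h, rfl⟩)

lemma piOp_mem_HS (i : ℕ) (h : i + 1 < n) : piOp n i ∈ HS n :=
  Algebra.subset_adjoin (Or.inr ⟨i, h, rfl⟩)

lemma piOp_sub_sigmaOp_mem_HS (i : ℕ) (h : i + 1 < n) : piOp n i - sigmaOp n i ∈ HS n := by
  have hsub : piOp n i - sigmaOp n i = piOp n i + (-1 : ℂ) • sigmaOp n i := by module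
  rw [hsub]
  exact add_mem (piOp_mem_HS i h) (Subalgebra.smul_mem _ (sigmaOp_mem_HS i h) _)

lemma rightMulOp_mem_HS (σ : PermN n) : rightMulOp n σ ∈ HS n := by
  have hσ : σ ∈ Young n ∅ := young_empty (n := n) ▸ Subgroup.mem_top σ
  induction hσ using Subgroup.closure_induction_right with
  | one => exact rightMulOp_one (n := n) ▸ one_mem _
  | mul_right ρ _ s hs ih =>
    obtain ⟨i, h, -, rfl⟩ := hs
    rw [rightMulOp_mul, ← sigmaOp_eq_rightMulOp]
    exact mul_mem (sigmaOp_mem_HS i h) ih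
  | mul_inv_cancel ρ _ s hs ih =>
    obtain ⟨i, h, -, rfl⟩ := hs
    rw [swapAt_inv, rightMulOp_mul, ← sigmaOp_eq_rightMulOp]
    exact mul_mem (sigmaOp_mem_HS i h) ih

lemma sum_smul_rightMulOp_apply_vD {D : Set ℕ} {w : CS n} (hw : w ∈ PD n D) :
    (∑ τ, w τ • rightMulOp n τ) (vD n D) = (#{ν | ν ∈ Young n D} : ℂ) • w := by
  ext μ
  simp only [LinearMap.sum_apply, LinearMap.smul_apply, Finsupp.finsetSum_apply,
    Finsupp.smul_apply, rightMulOp_apply, smul_eq_mul]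
  rw [← (Equiv.inv (PermN n)).trans (Equiv.mulRight μ) |>.sum_comp]
  calc ∑ ν : PermN n, w (ν⁻¹ * μ) * vD n D (μ * (ν⁻¹ * μ)⁻¹)
      = ∑ ν : PermN n, if ν ∈ Young n D then w μ else 0 := by
        refine Finset.sum_congr rfl fun ν _ => ?_
        rw [mul_inv_rev, inv_inv, mul_inv_cancel_left, vD_apply]
        split_ifs with hν
        · rw [apply_mul_eq_sign_mul_of_mem_PD hw (inv_mem hν), Equiv.Perm.sign_inv, mul_comm,
            ← mul_assoc, sign_mul_sign, one_mul]
        · rw [mul_zero]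
    _ = (#{ν | ν ∈ Young n D} : ℂ) * w μ := by
        rw [Finset.sum_ite, Finset.sum_const_zero, add_zero, Finset.sum_const, nsmul_eq_mul]

lemma exists_mem_HS_apply_vD_eq {D : Set ℕ} {w : CS n} (hw : w ∈ PD n D) :
    ∃ a ∈ HS n, a (vD n D) = w := by
  have hcard : (#{ν | ν ∈ Young n D} : ℂ) ≠ 0 :=
    Nat.cast_ne_zero.mpr (Finset.card_ne_zero.mpr ⟨1, by simp [one_mem]⟩)
  refine ⟨(#{ν | ν ∈ Young n D} : ℂ)⁻¹ • ∑ τ, w τ • rightMulOp n τ,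
    Subalgebra.smul_mem _ (Subalgebra.sum_mem _ fun τ _ =>
      Subalgebra.smul_mem _ (rightMulOp_mem_HS τ) _) _, ?_⟩
  rw [LinearMap.smul_apply, sum_smul_rightMulOp_apply_vD hw, smul_smul, inv_mul_cancel₀ hcard,
    one_smul]

lemma apply_eq_zero_of_mem_HomPD {D E : Set ℕ} {φ : ↥(PD n D) →ₗ[ℂ] ↥(PD n E)}
    (hφ : φ ∈ HomPD n D E) {a : Module.End ℂ (CS n)} (ha : a ∈ HS n) (hav : a (vD n D) = 0) :
    a (φ ⟨vD n D, vD_mem_PD D⟩ : CS n) = 0 := by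
  have := hφ a ha ⟨vD n D, vD_mem_PD D⟩ 0 hav.symm
  rwa [map_zero, ZeroMemClass.coe_zero, eq_comm] at this

lemma coe_apply_vD_of_mem_HomPD {D E : Set ℕ} {φ : ↥(PD n D) →ₗ[ℂ] ↥(PD n E)}
    (hφ : φ ∈ HomPD n D E) :
    (φ ⟨vD n D, vD_mem_PD D⟩ : CS n) = (φ ⟨vD n D, vD_mem_PD D⟩ : CS n) 1 • vD n D := by
  refine eq_smul_vD (fun i h hi τ => ?_) (fun i hi τ hτ => ?_)
  · have hv : (1 + sigmaOp n i) (vD n D) = 0 := by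
      ext τ
      simp [sigmaOp_apply i h, vD_mul_swapAt h hi]
    have := DFunLike.congr_fun
      (apply_eq_zero_of_mem_HomPD hφ (add_mem (one_mem _) (sigmaOp_mem_HS i h)) hv) τ
    simp only [LinearMap.add_apply, Module.End.one_apply, Finsupp.add_apply, sigmaOp_apply i h,
      Finsupp.zero_apply] at this
    linear_combination this
  · have h : i + 1 < n := hτ.1
    have hv : (piOp n i - sigmaOp n i) (vD n D) = 0 :=
      (piOp_sub_sigmaOp_eq_zero_iff i h _).mpr fun σ hσ => by
        rw [vD_apply, if_neg fun hy => not_mem_des_of_mem_young hy hi hσ]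
    exact (piOp_sub_sigmaOp_eq_zero_iff i h _).mp (apply_eq_zero_of_mem_HomPD hφ
      (piOp_sub_sigmaOp_mem_HS i h) hv) τ hτ

lemma exists_coe_apply_eq_smul_of_mem_HomPD {D E : Set ℕ} {φ : ↥(PD n D) →ₗ[ℂ] ↥(PD n E)}
    (hφ : φ ∈ HomPD n D E) : ∃ c : ℂ, ∀ w, (φ w : CS n) = c • (w : CS n) := by
  set x := (φ ⟨vD n D, vD_mem_PD D⟩ : CS n)
  refine ⟨x 1, fun w => ?_⟩
  obtain ⟨a, ha, haw⟩ := exists_mem_HS_apply_vD_eq w.2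
  calc (φ w : CS n) = a x := hφ a ha _ w haw.symm
    _ = a (x 1 • vD n D) := congrArg a (coe_apply_vD_of_mem_HomPD hφ)
    _ = x 1 • (w : CS n) := by rw [map_smul, haw]

lemma homPD_eq_span_inclusion {D E : Set ℕ} (hDE : D ⊆ E) :
    HomPD n D E = ℂ ∙ Submodule.inclusion (PD_mono hDE) := by
  refine le_antisymm (fun φ hφ => ?_) ((Submodule.span_singleton_le_iff_mem _ _).mpr
    fun _ _ _ _ hw => hw)
  obtain ⟨c, hc⟩ := exists_coe_apply_eq_smul_of_mem_HomPD hφ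
  exact Submodule.mem_span_singleton.mpr ⟨c, LinearMap.ext fun w => Subtype.ext (hc w).symm⟩

lemma homPD_eq_bot {D E : Set ℕ} (hD : ∀ i ∈ D, i + 1 < n) (hDE : ¬D ⊆ E) : HomPD n D E = ⊥ := by
  obtain ⟨i, hiD, hiE⟩ := Set.not_subset.mp hDE
  refine eq_bot_iff.mpr fun φ hφ => ?_
  obtain ⟨c, hc⟩ := exists_coe_apply_eq_smul_of_mem_HomPD hφ
  obtain rfl : c = 0 := by
    by_contra hc0
    have hv := (φ ⟨vD n D, vD_mem_PD D⟩).2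
    rw [hc, Submodule.smul_mem_iff _ hc0] at hv
    exact vD_not_mem_PD (hD i hiD) hiD hiE hv
  exact (Submodule.mem_bot ℂ).mpr (LinearMap.ext fun w => Subtype.ext (by simp [hc w]))

end

theorem cartan_matrix_general (n : ℕ) (D E : Set ℕ)
    (hD : ∀ i ∈ D, i + 1 < n) :
    Module.finrank ℂ ↥(HomPD n D E) = if D ⊆ E then 1 else 0 := by
  split_ifs with hDE
  · rw [homPD_eq_span_inclusion hDE]
    refine finrank_span_singleton fun h0 => ?_
    have := DFunLike.congr_fun (congrArg (fun φ => (φ ⟨vD n D, vD_mem_PD D⟩ : CS n)) h0) 1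
    simp [vD_one] at this
  · rw [homPD_eq_bot hD hDE, finrank_bot]

/-- **Statement 12.** `dim Hom_{H𝔖ₙ}(P_D, P_E)` is `1` if `D ⊆ E` and `0` otherwise:
the Cartan matrix of `H𝔖ₙ` is the incidence matrix of the boolean lattice. -/
theorem cartan_matrix (n : ℕ) (hn : 1 ≤ n) (D E : Set ℕ)
    (hD : ∀ i ∈ D, i + 1 < n) (hE : ∀ i ∈ E, i + 1 < n) :
    Module.finrank ℂ ↥(HomPD n D E) = if D ⊆ E then 1 else 0 :=
  cartan_matrix_general n D E hD

end
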